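/- For all positive integers m ≠ n, ∫₀¹ J₀′(z_m r) J₀′(z_n r) r dr = 0; that is, the radial derivatives of distinct Dirichlet eigenfunctions are orthogonal in L²((0,1), r dr). -/

import Mathlib

/-!
Put `u(r) = J₀(αr)` and `v(r) = J₀(βr)`. Bessel's equation in divergence form,
`(x J₀'(x))' = -x J₀(x)`, gives `(r u' v)' = r u' v' - α² r u v`, and symmetrically for `r v' u`.
Both products vanish at `r = 0` and, as `J₀(α) = J₀(β) = 0`, at `r = 1`; hence
`∫₀¹ r u' v' = α² ∫₀¹ r u v = β² ∫₀¹ r u v`, and `α² ≠ β²` forces both integrals to vanish.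
The divergence form of the equation is read off the power series of `J₀` in `t = (x / 2)²`,
whose coefficients satisfy `(n + 1)² cₙ₊₁ = -cₙ`.
-/

/-- The Bessel function of order zero, defined by its power series. -/
noncomputable def J0 (x : ℝ) : ℝ :=
  ∑' j : ℕ, ((-1 : ℝ) ^ j / ((Nat.factorial j : ℝ)) ^ 2) * (x / 2) ^ (2 * j)

open Nat

section PowerSeries

variable {c : ℕ → ℝ} {C : ℝ}

theorem nonneg_of_abs_le_div_factorial (hc : ∀ n, |c n| ≤ C / n !) : 0 ≤ C := by
  simpa using (abs_nonneg _).trans (hc 0)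

theorem summable_mul_pow_of_abs_le_div_factorial (hc : ∀ n, |c n| ≤ C / n !) (x : ℝ) :
    Summable fun n => c n * x ^ n := by
  refine .of_norm_bounded ((Real.summable_pow_div_factorial |x|).mul_left C) fun n => ?_
  rw [Real.norm_eq_abs, abs_mul, abs_pow]
  calc |c n| * |x| ^ n ≤ C / n ! * |x| ^ n := by gcongr; exact hc n
    _ = C * (|x| ^ n / n !) := by ring

theorem hasDerivAt_mul_tsum_mul_pow (hc : ∀ n, |c n| ≤ C / n !) (x : ℝ) :
    HasDerivAt (fun y => y * ∑' n, c n * y ^ n) (∑' n, (n + 1) * c n * x ^ n) x := by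
  set R := |x| + 1
  have hshift : (fun y => y * ∑' n, c n * y ^ n) = fun y => ∑' n, c n * y ^ (n + 1) := by
    ext y
    rw [← tsum_mul_left]
    exact tsum_congr fun n => by ring
  rw [hshift]
  refine hasDerivAt_tsum_of_isPreconnected (u := fun n => C * ((2 * R) ^ n / n !)) (y₀ := 0)
    (g := fun n y => c n * y ^ (n + 1)) (g' := fun n y => (n + 1) * c n * y ^ n)
    ((Real.summable_pow_div_factorial _).mul_left C) Metric.isOpen_ball
    (convex_ball (0 : ℝ) R).isPreconnected (fun n y _ => ?_) (fun n y hy => ?_)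
    (Metric.mem_ball_self (by positivity)) ?_ ?_
  · exact ((hasDerivAt_pow (n + 1) y).const_mul (c n)).congr_deriv
      (by rw [Nat.add_sub_cancel]; push_cast; ring)
  · have hyR : |y| ≤ R := by simpa using (Metric.mem_ball.1 hy).le
    have hn : ((n : ℝ) + 1) ≤ 2 ^ n := by exact_mod_cast Nat.lt_two_pow_self
    have hC : 0 ≤ C / n ! := (abs_nonneg _).trans (hc n)
    calc ‖(n + 1) * c n * y ^ n‖ = (n + 1) * (|c n| * |y| ^ n) := by
          rw [Real.norm_eq_abs, abs_mul, abs_mul, abs_pow, abs_of_nonneg (by positivity)]; ring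
      _ ≤ 2 ^ n * (C / n ! * R ^ n) := by gcongr; exact hc n
      _ = C * ((2 * R) ^ n / n !) := by rw [mul_pow]; ring
  · simp
  · simp [R]

def derivCoeff (c : ℕ → ℝ) (n : ℕ) : ℝ := (n + 1) * c (n + 1)

theorem abs_derivCoeff_le (hc : ∀ n, |c n| ≤ C / n !) (n : ℕ) : |derivCoeff c n| ≤ C / n ! := by
  rw [derivCoeff, abs_mul, abs_of_nonneg (by positivity)]
  calc ((n : ℝ) + 1) * |c (n + 1)| ≤ (n + 1) * (C / (n + 1) !) := by gcongr; exact hc _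
    _ = C / n ! := by
      rw [Nat.factorial_succ]; push_cast; field_simp

theorem hasDerivAt_tsum_mul_pow (hc : ∀ n, |c n| ≤ C / n !) (x : ℝ) :
    HasDerivAt (fun y => ∑' n, c n * y ^ n) (∑' n, derivCoeff c n * x ^ n) x := by
  have hc' : ∀ n, |c (n + 1)| ≤ C / n ! := fun n =>
    (hc (n + 1)).trans (div_le_div_of_nonneg_left (nonneg_of_abs_le_div_factorial hc)
      (by positivity) (by exact_mod_cast Nat.factorial_le n.le_succ))
  have hsplit : (fun y => ∑' n, c n * y ^ n) = fun y => c 0 + y * ∑' n, c (n + 1) * y ^ n := by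
    ext y
    rw [(summable_mul_pow_of_abs_le_div_factorial hc y).tsum_eq_zero_add, ← tsum_mul_left]
    simp only [pow_zero, mul_one, pow_succ]
    congr 1
    exact tsum_congr fun n => by ring
  rw [hsplit]
  exact (hasDerivAt_mul_tsum_mul_pow hc' x).const_add (c 0)

theorem continuous_tsum_mul_pow (hc : ∀ n, |c n| ≤ C / n !) :
    Continuous fun x => ∑' n, c n * x ^ n :=
  continuous_iff_continuousAt.2 fun x => (hasDerivAt_tsum_mul_pow hc x).continuousAt

end PowerSeries

section Bessel

noncomputable def besselCoeff (n : ℕ) : ℝ := (-1) ^ n / (n ! : ℝ) ^ 2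

theorem abs_besselCoeff_le (n : ℕ) : |besselCoeff n| ≤ 1 / n ! := by
  have h1 : (1 : ℝ) ≤ n ! := by exact_mod_cast n.factorial_pos
  rw [besselCoeff, abs_div, abs_pow, abs_neg, abs_one, one_pow, abs_of_pos (by positivity)]
  exact one_div_le_one_div_of_le (by positivity) (by nlinarith)

theorem succ_mul_derivCoeff_besselCoeff (n : ℕ) :
    (n + 1) * derivCoeff besselCoeff n = -besselCoeff n := by
  simp only [derivCoeff, besselCoeff, Nat.factorial_succ]
  push_cast
  field_simp
  ring

theorem J0_eq_tsum (x : ℝ) : J0 x = ∑' n, besselCoeff n * ((x / 2) ^ 2) ^ n := by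
  simp only [J0, besselCoeff, pow_mul]

theorem hasDerivAt_div_two_sq (x : ℝ) : HasDerivAt (fun y : ℝ => (y / 2) ^ 2) (x / 2) x := by
  have := ((hasDerivAt_id x).div_const 2).pow 2
  norm_num at this
  exact this.congr_deriv (by ring)

theorem hasDerivAt_J0 (x : ℝ) :
    HasDerivAt J0 (x / 2 * ∑' n, derivCoeff besselCoeff n * ((x / 2) ^ 2) ^ n) x := by
  rw [funext J0_eq_tsum, mul_comm]
  exact (hasDerivAt_tsum_mul_pow abs_besselCoeff_le _).comp x (hasDerivAt_div_two_sq x)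

theorem differentiable_J0 : Differentiable ℝ J0 := fun x => (hasDerivAt_J0 x).differentiableAt

theorem deriv_J0 :
    deriv J0 = fun x => x / 2 * ∑' n, derivCoeff besselCoeff n * ((x / 2) ^ 2) ^ n :=
  funext fun x => (hasDerivAt_J0 x).deriv

theorem continuous_deriv_J0 : Continuous (deriv J0) := by
  rw [deriv_J0]
  have := continuous_tsum_mul_pow (abs_derivCoeff_le abs_besselCoeff_le)
  exact (continuous_id.div_const 2).mul (this.comp (by fun_prop))

theorem hasDerivAt_mul_deriv_J0 (x : ℝ) :
    HasDerivAt (fun y => y * deriv J0 y) (-(x * J0 x)) x := by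
  have hT := hasDerivAt_mul_tsum_mul_pow (abs_derivCoeff_le abs_besselCoeff_le) ((x / 2) ^ 2)
  simp only [succ_mul_derivCoeff_besselCoeff, neg_mul, tsum_neg] at hT
  have := (hT.comp x (hasDerivAt_div_two_sq x)).const_mul 2
  rw [J0_eq_tsum]
  refine (this.congr_deriv (by ring)).congr_of_eventuallyEq (.of_forall fun y => ?_)
  simp only [deriv_J0, Function.comp_apply]
  ring

end Bessel

section Orthogonality

variable {f : ℝ → ℝ}

theorem hasDerivAt_mul_deriv_comp_mul_mul_comp_mul (hf : Differentiable ℝ f)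
    (hdiv : ∀ x, HasDerivAt (fun y => y * deriv f y) (-(x * f x)) x) (α β r : ℝ) :
    HasDerivAt (fun r => α * r * deriv f (α * r) * f (β * r))
      (α * β * (deriv f (α * r) * deriv f (β * r) * r) - α ^ 2 * (f (α * r) * f (β * r) * r))
      r := by
  have hlin : ∀ γ : ℝ, HasDerivAt (fun r => γ * r) γ r := fun γ => by
    simpa using (hasDerivAt_id r).const_mul γ
  have hp := (hdiv (α * r)).comp r (hlin α)
  have hq := (hf (β * r)).hasDerivAt.comp r (hlin β)
  exact (hp.mul hq).congr_deriv (by simp only [Function.comp_apply]; ring)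

theorem integral_deriv_comp_mul_mul_deriv_comp_mul_mul_eq_zero (hf : Differentiable ℝ f)
    (hf' : Continuous (deriv f))
    (hdiv : ∀ x, HasDerivAt (fun y => y * deriv f y) (-(x * f x)) x) {α β : ℝ}
    (hα : α ≠ 0) (hβ : β ≠ 0) (hαβ : α ^ 2 ≠ β ^ 2) (hfα : f α = 0) (hfβ : f β = 0) :
    ∫ r in (0 : ℝ)..1, deriv f (α * r) * deriv f (β * r) * r = 0 := by
  have hG : ∀ r, HasDerivAt
      (fun r => β ^ 2 * (α * r * deriv f (α * r) * f (β * r)) -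
        α ^ 2 * (β * r * deriv f (β * r) * f (α * r)))
      (α * β * (β ^ 2 - α ^ 2) * (deriv f (α * r) * deriv f (β * r) * r)) r := fun r =>
    (((hasDerivAt_mul_deriv_comp_mul_mul_comp_mul hf hdiv α β r).const_mul (β ^ 2)).sub
      ((hasDerivAt_mul_deriv_comp_mul_mul_comp_mul hf hdiv β α r).const_mul (α ^ 2))).congr_deriv
      (by ring)
  have hint : IntervalIntegrable
      (fun r => α * β * (β ^ 2 - α ^ 2) * (deriv f (α * r) * deriv f (β * r) * r))
      MeasureTheory.volume 0 1 :=
    (by fun_prop : Continuous _).intervalIntegrable 0 1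
  have h := intervalIntegral.integral_eq_sub_of_hasDerivAt (fun r _ => hG r) hint
  rw [intervalIntegral.integral_const_mul] at h
  simp only [mul_one, mul_zero, zero_mul, hfα, hfβ, sub_self] at h
  exact (mul_eq_zero.1 h).resolve_left
    (mul_ne_zero (mul_ne_zero hα hβ) (sub_ne_zero.2 hαβ.symm))

end Orthogonality

theorem deriv_eigenfunction_orthogonal_general
    (z : ℕ → ℝ)
    (hzpos : ∀ n, 1 ≤ n → 0 < z n)
    (hzmono : ∀ m n, 1 ≤ m → m < n → z m < z n)
    (hzzero : ∀ n, 1 ≤ n → J0 (z n) = 0) :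
    ∀ m n : ℕ, 1 ≤ m → 1 ≤ n → m ≠ n →
      ∫ r in (0 : ℝ)..1, deriv J0 (z m * r) * deriv J0 (z n * r) * r = 0 := by
  intro m n hm hn hmn
  have hsq : z m ^ 2 ≠ z n ^ 2 := by
    rcases hmn.lt_or_gt with h | h
    · exact (pow_lt_pow_left₀ (hzmono m n hm h) (hzpos m hm).le two_ne_zero).ne
    · exact (pow_lt_pow_left₀ (hzmono n m hn h) (hzpos n hn).le two_ne_zero).ne'
  exact integral_deriv_comp_mul_mul_deriv_comp_mul_mul_eq_zero differentiable_J0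
    continuous_deriv_J0 hasDerivAt_mul_deriv_J0 (hzpos m hm).ne' (hzpos n hn).ne' hsq
    (hzzero m hm) (hzzero n hn)

/-- Orthogonality in `L²((0,1), r dr)` of the radial derivatives of distinct Dirichlet
eigenfunctions: `∫₀¹ J₀′(z_m r) J₀′(z_n r) r dr = 0` for `m ≠ n`. -/
theorem deriv_eigenfunction_orthogonal
    (z : ℕ → ℝ)
    (hzpos : ∀ n, 1 ≤ n → 0 < z n)
    (hzmono : ∀ m n, 1 ≤ m → m < n → z m < z n)
    (hzzero : ∀ n, 1 ≤ n → J0 (z n) = 0)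
    (hzall : ∀ x : ℝ, 0 < x → J0 x = 0 → ∃ n, 1 ≤ n ∧ z n = x) :
    ∀ m n : ℕ, 1 ≤ m → 1 ≤ n → m ≠ n →
      ∫ r in (0 : ℝ)..1, deriv J0 (z m * r) * deriv J0 (z n * r) * r = 0 :=
  deriv_eigenfunction_orthogonal_general z hzpos hzmono hzzero
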